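/- Given a point y and a finite set of points Y in {1,...,N}, y is independent of Y with respect to the sparse linear class Q0 = { Phi theta : ||theta||_0 <= K0 } if and only if the row Phi(y) is linearly 2K0-independent of the rows { Phi(y') : y' in Y }. -/

import Mathlib

/-! Two `K0`-sparse functions `Φ θ₁`, `Φ θ₂` agree on `Y` and differ at `y` exactly when the
`2 K0`-sparse vector `θ = θ₁ - θ₂` satisfies `Φ y' ⬝ᵥ θ = 0` for `y' ∈ Y` and `Φ y ⬝ᵥ θ ≠ 0`, and
every `2 K0`-sparse vector is such a difference. On the other side, by duality in `ℝ^I`, the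
restriction of `Φ y` to `I` lies outside the span of the restrictions of the `Φ y'` iff some `θ`
supported on `I` is orthogonal to the latter but not to the former; since `2 K0 ≤ K`, every
`2 K0`-sparse support extends to an index set `I` of size exactly `2 K0`. -/

/-- `z` is independent of `Z'` with respect to the function class `Q`:
there exist two functions in `Q` agreeing on `Z'` but differing at `z`. -/
def IsIndep {Z : Type*} (Q : Set (Z → ℝ)) (z : Z) (Z' : Set Z) : Prop :=
  ∃ f ∈ Q, ∃ g ∈ Q, (∀ w ∈ Z', f w = g w) ∧ f z ≠ g z

/-- A list of elements of `Z` such that every element is independent of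
its predecessors with respect to `Q`. -/
def EluderSeq {Z : Type*} (Q : Set (Z → ℝ)) (l : List Z) : Prop :=
  ∀ i : Fin l.length,
    IsIndep Q (l.get i) {w | ∃ j : Fin l.length, j < i ∧ l.get j = w}

/-- The eluder dimension of `Q`: the length of the longest sequence of
elements of `Z` each independent of its predecessors. -/
noncomputable def eluderDim {Z : Type*} (Q : Set (Z → ℝ)) : ℕ∞ :=
  sSup ((fun l : List Z => (l.length : ℕ∞)) '' {l | EluderSeq Q l})

/-- The class of functions on `Fin N` given by `K0`-sparse linear combinations
of the columns of `Φ`, i.e. `y ↦ Φ(y)ᵀ θ` with `‖θ‖₀ ≤ K0`. -/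
def SparseClass {N K : ℕ} (Φ : Matrix (Fin N) (Fin K) ℝ) (K0 : ℕ) :
    Set (Fin N → ℝ) :=
  {f | ∃ θ : Fin K → ℝ,
    (Finset.univ.filter fun i => θ i ≠ 0).card ≤ K0 ∧
    f = fun y => ∑ i, Φ y i * θ i}

/-- `v` is linearly `l`-independent of the set of vectors `S`: there is an index
set `I` of cardinality `l` such that the restriction of `v` to `I` is not in the
span of the restrictions of the elements of `S` to `I`. -/
def LinLIndepOf {K : ℕ} (l : ℕ) (v : Fin K → ℝ) (S : Set (Fin K → ℝ)) : Prop :=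
  ∃ I : Finset (Fin K), I.card = l ∧
    (fun i : {x // x ∈ I} => v i.1) ∉
      Submodule.span ℝ ((fun w : Fin K → ℝ => fun i : {x // x ∈ I} => w i.1) '' S)

/-- A sequence (list) of rows of `Φ` such that every row is linearly
`l`-independent of its predecessors. -/
def LRankSeq {N K : ℕ} (Φ : Matrix (Fin N) (Fin K) ℝ) (l : ℕ)
    (s : List (Fin N)) : Prop :=
  ∀ i : Fin s.length,
    LinLIndepOf l (Φ (s.get i)) {w | ∃ j : Fin s.length, j < i ∧ w = Φ (s.get j)}

/-- The `l`-rank of `Φ`: the length of the longest sequence of rows of `Φ`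
such that every element is linearly `l`-independent of its predecessors. -/
noncomputable def lRank {N K : ℕ} (Φ : Matrix (Fin N) (Fin K) ℝ) (l : ℕ) : ℕ∞ :=
  sSup ((fun s : List (Fin N) => (s.length : ℕ∞)) '' {s | LRankSeq Φ l s})

open Finset

section Sparsity

variable {ι R : Type*} [Fintype ι] [DecidableEq ι] [AddCommGroup R] [DecidableEq R]

lemma card_support_sub_le (a b : ι → R) :
    #{i | (a - b) i ≠ 0} ≤ #{i | a i ≠ 0} + #{i | b i ≠ 0} := by
  refine (card_le_card fun i => ?_).trans (card_union_le _ _)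
  simp only [mem_filter, mem_univ, true_and, mem_union, Pi.sub_apply]
  contrapose!
  rintro ⟨ha, hb⟩
  simp [ha, hb]

lemma exists_sub_eq_of_card_support_le_add (θ : ι → R) {a b : ℕ}
    (hθ : #{i | θ i ≠ 0} ≤ a + b) :
    ∃ θ₁ θ₂ : ι → R, #{i | θ₁ i ≠ 0} ≤ a ∧ #{i | θ₂ i ≠ 0} ≤ b ∧ θ₁ - θ₂ = θ := by
  set S : Finset ι := {i | θ i ≠ 0}
  obtain ⟨J, hJS, hJ⟩ := exists_subset_card_eq (min_le_right a #S)
  refine ⟨J.piecewise θ 0, J.piecewise θ 0 - θ, ?_, ?_, sub_sub_cancel _ _⟩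
  · calc #{i | J.piecewise θ 0 i ≠ 0} ≤ #J := card_le_card fun i hi => ?_
      _ ≤ a := hJ ▸ min_le_left _ _
    by_contra hiJ
    simp [hiJ] at hi
  · calc #{i | (J.piecewise θ 0 - θ) i ≠ 0} ≤ #(S \ J) := card_le_card fun i hi => ?_
      _ ≤ b := by rw [card_sdiff_of_subset hJS]; omega
    by_cases hiJ : i ∈ J
    · simp [hiJ] at hi
    · simp_all [S]

end Sparsity

lemma mem_span_iff_forall_dotProduct_eq_zero {κ F : Type*} [Fintype κ] [DecidableEq κ]
    [Field F] (v : κ → F) (S : Set (κ → F)) :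
    v ∈ Submodule.span F S ↔ ∀ θ : κ → F, (∀ w ∈ S, w ⬝ᵥ θ = 0) → v ⬝ᵥ θ = 0 := by
  rw [← Subspace.forall_mem_dualAnnihilator_apply_eq_zero_iff,
    ← (dotProductEquiv F κ).toEquiv.forall_congr_right]
  refine forall_congr' fun θ => imp_congr ?_ (by simp [dotProduct_comm θ])
  rw [← SetLike.mem_coe, Submodule.coe_dualAnnihilator_span]
  simp [Set.subset_def, dotProduct_comm θ]

lemma dotProduct_restrict_of_support_subset {ι F : Type*} [Fintype ι] [CommSemiring F]
    (I : Finset ι) {θ : ι → F} (hθ : ∀ i ∉ I, θ i = 0) (w : ι → F) :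
    (fun i : I => w i) ⬝ᵥ (fun i : I => θ i) = w ⬝ᵥ θ := by
  rw [dotProduct, sum_coe_sort I fun i => w i * θ i]
  exact sum_subset (subset_univ I) fun i _ hi => by simp [hθ i hi]

lemma isIndep_sparseClass_iff {N K : ℕ} (Φ : Matrix (Fin N) (Fin K) ℝ) (K0 : ℕ)
    (y : Fin N) (Y : Set (Fin N)) :
    IsIndep (SparseClass Φ K0) y Y ↔
      ∃ θ : Fin K → ℝ, #{i | θ i ≠ 0} ≤ 2 * K0 ∧ (∀ y' ∈ Y, Φ y' ⬝ᵥ θ = 0) ∧ Φ y ⬝ᵥ θ ≠ 0 := by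
  constructor
  · rintro ⟨_, ⟨θ₁, h₁, rfl⟩, _, ⟨θ₂, h₂, rfl⟩, hY, hy⟩
    refine ⟨θ₁ - θ₂, (card_support_sub_le _ _).trans (by omega), fun y' hy' => ?_, ?_⟩
    · rw [dotProduct_sub, sub_eq_zero]
      exact hY y' hy'
    · rwa [dotProduct_sub, sub_ne_zero]
  · rintro ⟨θ, hθ, hY, hy⟩
    obtain ⟨θ₁, θ₂, h₁, h₂, rfl⟩ :=
      exists_sub_eq_of_card_support_le_add (a := K0) (b := K0) θ (by omega)
    rw [dotProduct_sub, sub_ne_zero] at hy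
    exact ⟨_, ⟨θ₁, h₁, rfl⟩, _, ⟨θ₂, h₂, rfl⟩,
      fun y' hy' => sub_eq_zero.mp ((dotProduct_sub _ _ _).symm.trans (hY y' hy')), hy⟩

lemma linLIndepOf_iff_exists_dotProduct {K l : ℕ} (hl : l ≤ K) (v : Fin K → ℝ)
    (S : Set (Fin K → ℝ)) :
    LinLIndepOf l v S ↔
      ∃ θ : Fin K → ℝ, #{i | θ i ≠ 0} ≤ l ∧ (∀ w ∈ S, w ⬝ᵥ θ = 0) ∧ v ⬝ᵥ θ ≠ 0 := by
  simp only [LinLIndepOf, mem_span_iff_forall_dotProduct_eq_zero, Set.forall_mem_image]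
  push Not
  constructor
  · rintro ⟨I, hI, θ, hS, hv⟩
    set θ' : Fin K → ℝ := fun i => if h : i ∈ I then θ ⟨i, h⟩ else 0
    have hθ' : ∀ i ∉ I, θ' i = 0 := fun i hi => dif_neg hi
    have hres : (fun i : I => θ' i) = θ := funext fun i => dif_pos i.2
    refine ⟨θ', ?_, fun w hw => ?_, ?_⟩
    · exact hI ▸ card_le_card fun i hi => by_contra fun hiI => by simp [hθ' i hiI] at hi
    · rw [← dotProduct_restrict_of_support_subset I hθ', hres]
      exact hS hw
    · rwa [← dotProduct_restrict_of_support_subset I hθ', hres]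
  · rintro ⟨θ, hθ, hS, hv⟩
    obtain ⟨I, hsupp, -, hI⟩ :=
      exists_subsuperset_card_eq (subset_univ _) hθ (by simpa using hl)
    have hθI : ∀ i ∉ I, θ i = 0 := fun i hi => by_contra fun h => hi (hsupp (by simp [h]))
    refine ⟨I, hI, fun i : I => θ i, fun w hw => ?_, ?_⟩
    · rw [dotProduct_restrict_of_support_subset I hθI]
      exact hS w hw
    · rwa [dotProduct_restrict_of_support_subset I hθI]

theorem isIndep_sparseClass_iff_linLIndep {N K K0 : ℕ}
    (Φ : Matrix (Fin N) (Fin K) ℝ) (h : 2 * K0 ≤ K)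
    (y : Fin N) (Y : Finset (Fin N)) :
    IsIndep (SparseClass Φ K0) y (↑Y : Set (Fin N))
      ↔ LinLIndepOf (2 * K0) (Φ y) {w | ∃ y' ∈ Y, w = Φ y'} := by
  rw [isIndep_sparseClass_iff, linLIndepOf_iff_exists_dotProduct h]
  simp only [Set.mem_ofPred_eq, forall_exists_index, and_imp, mem_coe,
    @forall_comm (Fin K → ℝ), forall_eq]
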